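/- arXiv:1702.05434 — 9 statements merged into one kernel-verified Lean document; each statement's English description precedes it below -/
import Mathlib

section
/- Let B be an m×n real matrix and a ∈ ℝ^m. Set k = n − rank(B), suppose the vectors x⁽¹⁾,…,x⁽ᵏ⁾ ∈ ℝⁿ form a basis of the kernel {x ∈ ℝⁿ : Bx = 0}, and suppose y ∈ ℝⁿ satisfies By = a. Let g : (ℝ₊)ⁿ → ℝ₊ (positive reals) satisfy the scaling invariance: for all s = (s₁,…,s_m) with sⱼ > 0 and all W = (W₁,…,Wₙ) with Wᵢ > 0, g(W₁·∏ⱼ sⱼ^{B_{j1}}, …, Wₙ·∏ⱼ sⱼ^{B_{jn}}) = (∏ⱼ sⱼ^{aⱼ}) · g(W). Then there exists a function F : (ℝ₊)ᵏ → ℝ₊ such that for all W, g(W) · W₁^{−y₁} ⋯ Wₙ^{−yₙ} = F(π₁,…,π_k), where πᵢ = W₁^{x_{1i}} ⋯ Wₙ^{x_{ni}} and x⁽ⁱ⁾ = (x_{1i},…,x_{ni}). -/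
/-!
In logarithmic coordinates `w = log W` a change of units `s = exp t` is the translation
`w ↦ w + Bᵀ t`, and the dimensionless products are the exponentials of the linear forms
`w ↦ x ⬝ᵥ w` with `x ∈ ker B`. If `W` and `W'` have the same dimensionless products, then
`log W' - log W` is orthogonal to `ker B`, hence lies in the row space of `B`: `W'` is obtained
from `W` by a change of units. Since `B y = a`, the factor `∏ sⱼ ^ aⱼ` that `g` picks up is
cancelled exactly by the one picked up by `∏ Wᵢ ^ (-yᵢ)`, so `g W * ∏ Wᵢ ^ (-yᵢ)` is a function
of the dimensionless products.
-/

open Matrix Real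

theorem Matrix.exists_vecMul_eq_of_dotProduct_eq_zero {K m n : Type*} [Field K] [Fintype m]
    [Fintype n] (B : Matrix m n K) {z : n → K} (hz : ∀ v, B *ᵥ v = 0 → z ⬝ᵥ v = 0) :
    ∃ t, t ᵥ* B = z := by
  classical
  have hmem : dotProductEquiv K n z ∈ (LinearMap.ker B.mulVecLin).dualAnnihilator :=
    (Submodule.mem_dualAnnihilator _).2 hz
  rw [← LinearMap.range_dualMap_eq_dualAnnihilator_ker] at hmem
  obtain ⟨ψ, hψ⟩ := hmem
  set e := dotProductEquiv K m
  refine ⟨e.symm ψ, dotProduct_eq _ _ fun v => ?_⟩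
  calc e.symm ψ ᵥ* B ⬝ᵥ v = e (e.symm ψ) (B *ᵥ v) := (dotProduct_mulVec _ _ _).symm
    _ = B.mulVecLin.dualMap ψ v := by rw [e.apply_symm_apply]; rfl
    _ = z ⬝ᵥ v := by rw [hψ]; rfl

namespace Real

variable {ι κ : Type*} [Fintype ι] [Fintype κ]

theorem prod_rpow_eq_exp_dotProduct_log {W : ι → ℝ} (hW : ∀ i, 0 < W i) (x : ι → ℝ) :
    ∏ i, W i ^ x i = exp (x ⬝ᵥ fun i => log (W i)) := by
  simp_rw [rpow_def_of_pos (hW _), ← exp_sum, dotProduct, mul_comm]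

theorem prod_exp_rpow (t x : ι → ℝ) : ∏ i, exp (t i) ^ x i = exp (x ⬝ᵥ t) := by
  simp_rw [prod_rpow_eq_exp_dotProduct_log (fun i => exp_pos (t i)), log_exp]

end Real

section Scaling

variable {ι κ : Type*} [Fintype ι] [Fintype κ]

theorem exists_eq_mul_exp_vecMul_of_prod_rpow_eq (B : Matrix κ ι ℝ) {xs : Set (ι → ℝ)}
    (hxs : LinearMap.ker B.mulVecLin ≤ Submodule.span ℝ xs)
    {W W' : ι → ℝ} (hW : ∀ i, 0 < W i) (hW' : ∀ i, 0 < W' i)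
    (hpi : ∀ x ∈ xs, ∏ i, W i ^ x i = ∏ i, W' i ^ x i) :
    ∃ t : κ → ℝ, W' = fun i => W i * exp ((t ᵥ* B) i) := by
  set z : ι → ℝ := (fun i => log (W' i)) - fun i => log (W i) with hz_def
  have hz_xs : ∀ x ∈ xs, z ⬝ᵥ x = 0 := fun x hx => by
    have := hpi x hx
    rw [prod_rpow_eq_exp_dotProduct_log hW, prod_rpow_eq_exp_dotProduct_log hW', exp_eq_exp]
      at this
    rw [dotProduct_comm, dotProduct_sub, this, sub_self]
  have hz : ∀ v, B *ᵥ v = 0 → z ⬝ᵥ v = 0 := fun v hv =>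
    Submodule.span_induction hz_xs (dotProduct_zero z)
      (fun _ _ _ _ h₁ h₂ => by rw [dotProduct_add, h₁, h₂, add_zero])
      (fun c _ _ h => by rw [dotProduct_smul, h, smul_zero]) (hxs hv)
  obtain ⟨t, ht⟩ := B.exists_vecMul_eq_of_dotProduct_eq_zero hz
  refine ⟨t, funext fun i => ?_⟩
  rw [ht, hz_def, Pi.sub_apply, exp_sub, exp_log (hW' i), exp_log (hW i),
    mul_div_cancel₀ _ (hW i).ne']

theorem mul_prod_rpow_neg_eq_of_scaling (B : Matrix κ ι ℝ) {a : κ → ℝ} {y : ι → ℝ}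
    (hy : B *ᵥ y = a) {g : (ι → ℝ) → ℝ}
    (hg : ∀ (s : κ → ℝ) (W : ι → ℝ), (∀ j, 0 < s j) → (∀ i, 0 < W i) →
      g (fun i => W i * ∏ j, s j ^ B j i) = (∏ j, s j ^ a j) * g W)
    {W : ι → ℝ} (hW : ∀ i, 0 < W i) (t : κ → ℝ) :
    g (fun i => W i * exp ((t ᵥ* B) i)) * ∏ i, (W i * exp ((t ᵥ* B) i)) ^ (-y i) =
      g W * ∏ i, W i ^ (-y i) := by
  have hscale : ∀ i, ∏ j, exp (t j) ^ B j i = exp ((t ᵥ* B) i) := fun i => by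
    rw [prod_exp_rpow, dotProduct_comm]; rfl
  have hg_exp := hg (fun j => exp (t j)) W (fun j => exp_pos _) hW
  simp only [hscale, prod_exp_rpow] at hg_exp
  have hprod : ∏ i, (W i * exp ((t ᵥ* B) i)) ^ (-y i) =
      (∏ i, W i ^ (-y i)) * exp (-(a ⬝ᵥ t)) := by
    simp_rw [mul_rpow (hW _).le (exp_pos _).le, Finset.prod_mul_distrib, prod_exp_rpow]
    rw [← hy, dotProduct_comm (B *ᵥ y), dotProduct_mulVec, ← dotProduct_neg, dotProduct_comm]
    rfl
  rw [hg_exp, hprod, exp_neg]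
  field_simp

end Scaling

theorem pi_theorem_general (m n : ℕ) (B : Matrix (Fin m) (Fin n) ℝ) (a : Fin m → ℝ)
    (xs : Fin (n - B.rank) → (Fin n → ℝ))
    (hxs_span : Submodule.span ℝ (Set.range xs) = LinearMap.ker B.mulVecLin)
    (y : Fin n → ℝ) (hy : B.mulVec y = a)
    (g : (Fin n → ℝ) → ℝ)
    (hg_inv : ∀ (s : Fin m → ℝ) (W : Fin n → ℝ), (∀ j, 0 < s j) → (∀ i, 0 < W i) →
      g (fun i => W i * ∏ j, s j ^ B j i) = (∏ j, s j ^ a j) * g W) :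
    ∃ F : (Fin (n - B.rank) → ℝ) → ℝ,
      ∀ W : Fin n → ℝ, (∀ i, 0 < W i) →
        g W * ∏ i, W i ^ (-(y i)) = F (fun i => ∏ j, W j ^ xs i j) := by
  let Pos := {W : Fin n → ℝ // ∀ i, 0 < W i}
  let piGroups : Pos → Fin (n - B.rank) → ℝ := fun W i => ∏ j, W.1 j ^ xs i j
  let φ : Pos → ℝ := fun W => g W.1 * ∏ i, W.1 i ^ (-(y i))
  have hφ : φ.FactorsThrough piGroups := by
    rintro ⟨W, hW⟩ ⟨W', hW'⟩ hpi
    obtain ⟨t, rfl⟩ := exists_eq_mul_exp_vecMul_of_prod_rpow_eq B hxs_span.ge hW hW'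
      (by rintro _ ⟨i, rfl⟩; exact congrFun hpi i)
    exact (mul_prod_rpow_neg_eq_of_scaling B hy hg_inv hW t).symm
  exact ⟨Function.extend piGroups φ 0, fun W hW => (hφ.extend_apply 0 ⟨W, hW⟩).symm⟩

/-- The Pi-Theorem of dimensional analysis. `B` is the `m × n` matrix of dimension
exponents of the inputs, `a` the dimension exponents of the output,
`xs` is a basis of the kernel `{x : B x = 0}` (of cardinality `k = n - rank B`),
and `y` solves `B y = a`. If `g` maps positive vectors to positive reals and satisfies
the unit-scaling invariance, then `g W * ∏ i, W i ^ (-y i)` is a function of the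
dimensionless products `π i = ∏ j, W j ^ xs i j`. -/
theorem pi_theorem (m n : ℕ) (B : Matrix (Fin m) (Fin n) ℝ) (a : Fin m → ℝ)
    (xs : Fin (n - B.rank) → (Fin n → ℝ))
    (hxs_indep : LinearIndependent ℝ xs)
    (hxs_span : Submodule.span ℝ (Set.range xs) = LinearMap.ker B.mulVecLin)
    (y : Fin n → ℝ) (hy : B.mulVec y = a)
    (g : (Fin n → ℝ) → ℝ)
    (hg_pos : ∀ W : Fin n → ℝ, (∀ i, 0 < W i) → 0 < g W)
    (hg_inv : ∀ (s : Fin m → ℝ) (W : Fin n → ℝ), (∀ j, 0 < s j) → (∀ i, 0 < W i) →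
      g (fun i => W i * ∏ j, s j ^ B j i) = (∏ j, s j ^ a j) * g W) :
    ∃ F : (Fin (n - B.rank) → ℝ) → ℝ,
      ∀ W : Fin n → ℝ, (∀ i, 0 < W i) →
        g W * ∏ i, W i ^ (-(y i)) = F (fun i => ∏ j, W j ^ xs i j) :=
  pi_theorem_general m n B a xs hxs_span y hy g hg_inv
end

section
/- Let B be an m×n real matrix with rank(B) = n, let a ∈ ℝ^m, and let y ∈ ℝⁿ satisfy By = a. Let g : (ℝ₊)ⁿ → ℝ₊ satisfy the scaling invariance: for all s = (s₁,…,s_m) with sⱼ > 0 and all W = (W₁,…,Wₙ) with Wᵢ > 0, g(W₁·∏ⱼ sⱼ^{B_{j1}}, …, Wₙ·∏ⱼ sⱼ^{B_{jn}}) = (∏ⱼ sⱼ^{aⱼ}) · g(W). Then there exists a constant c > 0 such that for all W, g(W) = c · W₁^{y₁} ⋯ Wₙ^{yₙ}. -/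
/-- The case `k = 0` of the Pi-Theorem: if the dimension matrix `B` has full column
rank `n` and `y` is the (unique) solution of `B y = a`, then any positive, unit-scaling
invariant `g` is of the form `g W = c * W 1 ^ y 1 * ⋯ * W n ^ y n` for a constant `c > 0`. -/
theorem pi_theorem_full_rank (m n : ℕ) (B : Matrix (Fin m) (Fin n) ℝ)
    (hrank : B.rank = n) (a : Fin m → ℝ)
    (y : Fin n → ℝ) (hy : B.mulVec y = a)
    (g : (Fin n → ℝ) → ℝ)
    (hg_pos : ∀ W : Fin n → ℝ, (∀ i, 0 < W i) → 0 < g W)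
    (hg_inv : ∀ (s : Fin m → ℝ) (W : Fin n → ℝ), (∀ j, 0 < s j) → (∀ i, 0 < W i) →
      g (fun i => W i * ∏ j, s j ^ B j i) = (∏ j, s j ^ a j) * g W) :
    ∃ c : ℝ, 0 < c ∧
      ∀ W : Fin n → ℝ, (∀ i, 0 < W i) → g W = c * ∏ i, W i ^ y i := by
  -- surjectivity of transpose mulVecLin
  have hsurj : Function.Surjective (Matrix.mulVecLin B.transpose) := by
    rw [← LinearMap.range_eq_top]
    apply Submodule.eq_top_of_finrank_eq
    have : B.transpose.rank = n := by rw [Matrix.rank_transpose]; exact hrank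
    simpa [Matrix.rank] using this
  refine ⟨g (fun _ => 1), hg_pos _ (fun _ => one_pos), fun W hW => ?_⟩
  obtain ⟨t, ht⟩ := hsurj (fun i => Real.log (W i))
  have ht' : ∀ i, ∑ j, t j * B j i = Real.log (W i) := by
    intro i
    have := congrFun ht i
    simpa [Matrix.mulVecLin, Matrix.mulVec, dotProduct, Matrix.transpose,
      mul_comm] using this
  set s : Fin m → ℝ := fun j => Real.exp (t j) with hs
  have hspos : ∀ j, 0 < s j := fun j => Real.exp_pos _
  have hprod : ∀ i, (1 : ℝ) * ∏ j, s j ^ B j i = W i := by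
    intro i
    rw [one_mul]
    have : ∀ j, s j ^ B j i = Real.exp (t j * B j i) := by
      intro j
      rw [hs, ← Real.exp_mul]
    rw [Finset.prod_congr rfl (fun j _ => this j), ← Real.exp_sum, ht' i,
      Real.exp_log (hW i)]
  have key := hg_inv s (fun _ => 1) hspos (fun _ => one_pos)
  have hfun : (fun i => (1 : ℝ) * ∏ j, s j ^ B j i) = W := funext hprod
  rw [hfun] at key
  rw [key, mul_comm]
  congr 1
  -- ∏ j, s j ^ a j = ∏ i, W i ^ y i
  have ha : ∀ j, a j = ∑ i, B j i * y i := by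
    intro j
    rw [← hy]
    simp [Matrix.mulVec, dotProduct]
  calc ∏ j, s j ^ a j = Real.exp (∑ j, t j * a j) := by
        rw [Real.exp_sum]
        exact Finset.prod_congr rfl (fun j _ => by rw [hs, ← Real.exp_mul])
    _ = Real.exp (∑ i, Real.log (W i) * y i) := by
        congr 1
        have : ∑ j, t j * a j = ∑ j, ∑ i, t j * B j i * y i := by
          apply Finset.sum_congr rfl
          intro j _
          rw [ha j, Finset.mul_sum]
          exact Finset.sum_congr rfl (fun i _ => by ring)
        rw [this, Finset.sum_comm]
        apply Finset.sum_congr rfl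
        intro i _
        rw [← ht' i, Finset.sum_mul]
    _ = ∏ i, W i ^ y i := by
        rw [Real.exp_sum]
        apply Finset.prod_congr rfl
        intro i _
        rw [Real.rpow_def_of_pos (hW i)]
end

section
/- Let B be an m×n real matrix with rank(B) = n − 1, let a ∈ ℝ^m, let x ∈ ℝⁿ be a nonzero solution of Bx = 0, and let y ∈ ℝⁿ satisfy By = a. Let g : (ℝ₊)ⁿ → ℝ₊ satisfy the scaling invariance: for all s = (s₁,…,s_m) with sⱼ > 0 and all W = (W₁,…,Wₙ) with Wᵢ > 0, g(W₁·∏ⱼ sⱼ^{B_{j1}}, …, Wₙ·∏ⱼ sⱼ^{B_{jn}}) = (∏ⱼ sⱼ^{aⱼ}) · g(W). Then there exists a function F : ℝ₊ → ℝ₊ such that for all W, g(W) = F(W₁^{x₁} ⋯ Wₙ^{xₙ}) · W₁^{y₁} ⋯ Wₙ^{yₙ}. -/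
/-!
In logarithmic coordinates `w = log W` the scaling invariance says that translating `w` by a
vector `t ᵥ* B` of the row space of `B` multiplies `g` by `exp (t ⬝ᵥ a) = exp ((t ᵥ* B) ⬝ᵥ y)`.
Since `B` has corank one with kernel spanned by `x`, its row space is the hyperplane `x ⬝ᵥ v = 0`,
so `g W / ∏ W i ^ y i` depends on `w` only through `x ⬝ᵥ w = log ∏ W i ^ x i`.
-/

open Matrix Real

theorem Matrix.range_mulVecLin_transpose_eq_ker_dotProduct {K m n : Type*} [Field K]
    [Fintype m] [Fintype n] [DecidableEq n] (B : Matrix m n K)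
    (hrank : B.rank = Fintype.card n - 1) {x : n → K} (hx0 : x ≠ 0) (hx : B *ᵥ x = 0) :
    LinearMap.range Bᵀ.mulVecLin = LinearMap.ker (dotProductEquiv K n x) := by
  have hle : LinearMap.range Bᵀ.mulVecLin ≤ LinearMap.ker (dotProductEquiv K n x) := by
    rintro _ ⟨t, rfl⟩
    rw [LinearMap.mem_ker, dotProductEquiv_apply_apply, mulVecLin_apply, mulVec_transpose,
      dotProduct_comm, ← dotProduct_mulVec, hx, dotProduct_zero]
  refine Submodule.eq_of_le_of_finrank_eq hle ?_
  have hker := Module.Dual.finrank_ker_add_one_of_ne_zero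
    ((dotProductEquiv K n).map_ne_zero_iff.2 hx0)
  rw [Module.finrank_fintype_fun_eq_card] at hker
  rw [← Matrix.rank, rank_transpose, hrank]
  omega

theorem Real.prod_exp_rpow_s2 {ι : Type*} [Fintype ι] (t y : ι → ℝ) :
    ∏ i, exp (t i) ^ y i = exp (t ⬝ᵥ y) := by
  simp_rw [← exp_mul, ← exp_sum]
  rfl

def IsDimensionallyHomogeneous {ι κ : Type*} [Fintype κ] (B : Matrix κ ι ℝ) (a : κ → ℝ)
    (g : (ι → ℝ) → ℝ) : Prop :=
  ∀ (s : κ → ℝ) (W : ι → ℝ), (∀ j, 0 < s j) → (∀ i, 0 < W i) →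
    g (fun i => W i * ∏ j, s j ^ B j i) = (∏ j, s j ^ a j) * g W

namespace IsDimensionallyHomogeneous

variable {ι κ : Type*} [Fintype κ] {B : Matrix κ ι ℝ} {a : κ → ℝ}
  {g : (ι → ℝ) → ℝ}

theorem apply_exp_add_vecMul (hg : IsDimensionallyHomogeneous B a g) (w : ι → ℝ)
    (t : κ → ℝ) :
    g (fun i => exp (w i + (t ᵥ* B) i)) = exp (t ⬝ᵥ a) * g (fun i => exp (w i)) := by
  have h := hg (fun j => exp (t j)) (fun i => exp (w i)) (fun _ => exp_pos _)
    (fun _ => exp_pos _)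
  simp_rw [prod_exp_rpow_s2, ← exp_add] at h
  exact h

theorem apply_exp_eq [Fintype ι] [DecidableEq ι] (hg : IsDimensionallyHomogeneous B a g)
    (hrank : B.rank = Fintype.card ι - 1) {x : ι → ℝ} (hx0 : x ≠ 0) (hx : B *ᵥ x = 0)
    {y : ι → ℝ} (hy : B *ᵥ y = a) {w w' : ι → ℝ} (hw : x ⬝ᵥ w = x ⬝ᵥ w') :
    g (fun i => exp (w' i)) = exp ((w' - w) ⬝ᵥ y) * g (fun i => exp (w i)) := by
  have hmem : w' - w ∈ LinearMap.ker (dotProductEquiv ℝ ι x) := by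
    simp [dotProduct_sub, hw]
  rw [← B.range_mulVecLin_transpose_eq_ker_dotProduct hrank hx0 hx] at hmem
  obtain ⟨t, ht⟩ := hmem
  rw [mulVecLin_apply, mulVec_transpose] at ht
  obtain rfl : w' = w + t ᵥ* B := by rw [ht]; abel
  rw [add_sub_cancel_left, ← dotProduct_mulVec, hy]
  exact hg.apply_exp_add_vecMul w t

end IsDimensionallyHomogeneous

/-- The case `k = 1` of the Pi-Theorem: if the dimension matrix `B` has rank `n - 1`,
`x ≠ 0` solves `B x = 0` and `y` solves `B y = a`, then any positive, unit-scaling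
invariant `g` is of the form
`g W = F (W 1 ^ x 1 * ⋯ * W n ^ x n) * W 1 ^ y 1 * ⋯ * W n ^ y n`. -/
theorem pi_theorem_corank_one (m n : ℕ) (B : Matrix (Fin m) (Fin n) ℝ)
    (hrank : B.rank = n - 1) (a : Fin m → ℝ)
    (x : Fin n → ℝ) (hx0 : x ≠ 0) (hx : B.mulVec x = 0)
    (y : Fin n → ℝ) (hy : B.mulVec y = a)
    (g : (Fin n → ℝ) → ℝ)
    (hg_pos : ∀ W : Fin n → ℝ, (∀ i, 0 < W i) → 0 < g W)
    (hg_inv : ∀ (s : Fin m → ℝ) (W : Fin n → ℝ), (∀ j, 0 < s j) → (∀ i, 0 < W i) →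
      g (fun i => W i * ∏ j, s j ^ B j i) = (∏ j, s j ^ a j) * g W) :
    ∃ F : ℝ → ℝ, (∀ z : ℝ, 0 < z → 0 < F z) ∧
      ∀ W : Fin n → ℝ, (∀ i, 0 < W i) →
        g W = F (∏ i, W i ^ x i) * ∏ i, W i ^ y i := by
  have hxx : x ⬝ᵥ x ≠ 0 := dotProduct_self_eq_zero.not.2 hx0
  -- `exp ((log z / (x ⬝ᵥ x)) • x)` is a point on the level set `∏ W i ^ x i = z`.
  let F z := g (fun i => exp (log z / (x ⬝ᵥ x) * x i)) / exp (log z / (x ⬝ᵥ x) * (x ⬝ᵥ y))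
  refine ⟨F, fun z _ => div_pos (hg_pos _ fun _ => exp_pos _) (exp_pos _), fun W hW => ?_⟩
  obtain ⟨w, rfl⟩ : ∃ w : Fin n → ℝ, W = fun i => exp (w i) :=
    ⟨fun i => log (W i), funext fun i => (exp_log (hW i)).symm⟩
  have hlevel : x ⬝ᵥ ((w ⬝ᵥ x / (x ⬝ᵥ x)) • x) = x ⬝ᵥ w := by
    rw [dotProduct_smul, smul_eq_mul, div_mul_cancel₀ _ hxx, dotProduct_comm]
  rw [IsDimensionallyHomogeneous.apply_exp_eq hg_inv (by simpa using hrank) hx0 hx hy hlevel]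
  simp only [F, prod_exp_rpow_s2, log_exp, sub_dotProduct, smul_dotProduct, smul_eq_mul, exp_sub,
    Pi.smul_apply]
  field_simp
end

section
/- Let g : (ℝ₊)⁴ → ℝ₊ satisfy: for all Q, P, V, w > 0 and all S, U, τ, A > 0, g(S·Q, S⁻¹·U·A⁻¹·P, S·τ⁻¹·V, τ⁻¹·A²·w) = A · g(Q, P, V, w). Then there exists a constant c > 0 such that for all Q, P, V, w > 0, g(Q, P, V, w) = c · √w · √(Q/V). In particular, g is proportional to the square root of Q (the square-root law of market impact) and does not depend on P. -/
/-! The four rescalings act transitively on `(ℝ₊)⁴`: taking `S = Q`, `τ = Q / V`,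
`A = √(w Q / V)` and `U = Q A P` moves `(1, 1, 1, 1)` to `(Q, P, V, w)`. Hence `g` is
determined by its value at `(1, 1, 1, 1)`, multiplied by the leverage factor `A`. -/

lemma apply_eq_sqrt_mul_apply_one (g : ℝ → ℝ → ℝ → ℝ → ℝ)
    (hg_inv : ∀ Q P V w S U τ A : ℝ, 0 < Q → 0 < P → 0 < V → 0 < w →
      0 < S → 0 < U → 0 < τ → 0 < A →
      g (S * Q) (S⁻¹ * U * A⁻¹ * P) (S * τ⁻¹ * V) (τ⁻¹ * A ^ 2 * w)
        = A * g Q P V w)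
    {Q P V w : ℝ} (hQ : 0 < Q) (hP : 0 < P) (hV : 0 < V) (hw : 0 < w) :
    g Q P V w = Real.sqrt (w * (Q / V)) * g 1 1 1 1 := by
  set A := Real.sqrt (w * (Q / V))
  have hA : 0 < A := by positivity
  have hA_sq : A ^ 2 = w * (Q / V) := Real.sq_sqrt (by positivity)
  have h := hg_inv 1 1 1 1 Q (Q * A * P) (Q / V) A one_pos one_pos one_pos one_pos
    hQ (by positivity) (by positivity) hA
  have hP' : Q⁻¹ * (Q * A * P) * A⁻¹ * 1 = P := by field_simp
  have hV' : Q * (Q / V)⁻¹ * 1 = V := by field_simp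
  have hw' : (Q / V)⁻¹ * A ^ 2 * 1 = w := by rw [hA_sq]; field_simp
  rwa [mul_one, hP', hV', hw'] at h

/-- The square-root law of market impact: if the market impact `g Q P V w`
(with `w = σ²`) is positive and invariant under rescaling the units of shares (`S`),
money (`U`) and time (`τ`) and under leverage neutrality (`A`), then
`g Q P V w = c * √w * √(Q / V)` for a constant `c > 0`.  In particular `g` is
proportional to the square root of `Q` and does not depend on `P`. -/
theorem square_root_law (g : ℝ → ℝ → ℝ → ℝ → ℝ)
    (hg_pos : ∀ Q P V w : ℝ, 0 < Q → 0 < P → 0 < V → 0 < w → 0 < g Q P V w)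
    (hg_inv : ∀ Q P V w S U τ A : ℝ, 0 < Q → 0 < P → 0 < V → 0 < w →
      0 < S → 0 < U → 0 < τ → 0 < A →
      g (S * Q) (S⁻¹ * U * A⁻¹ * P) (S * τ⁻¹ * V) (τ⁻¹ * A ^ 2 * w)
        = A * g Q P V w) :
    ∃ c : ℝ, 0 < c ∧ ∀ Q P V w : ℝ, 0 < Q → 0 < P → 0 < V → 0 < w →
      g Q P V w = c * Real.sqrt w * Real.sqrt (Q / V) := by
  refine ⟨g 1 1 1 1, hg_pos 1 1 1 1 one_pos one_pos one_pos one_pos, ?_⟩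
  intro Q P V w hQ hP hV hw
  rw [apply_eq_sqrt_mul_apply_one g hg_inv hQ hP hV hw, Real.sqrt_mul hw.le]
  ring
end

section
/- Let g : (ℝ₊)⁵ → ℝ₊ satisfy: for all Q, P, V, w, C > 0 and all S, U, τ, A > 0, g(S·Q, S⁻¹·U·A⁻¹·P, S·τ⁻¹·V, τ⁻¹·A²·w, U·C) = A · g(Q, P, V, w, C). Then there exists a function f : ℝ₊ → ℝ₊ such that for all Q, P, V, w, C > 0, g(Q, P, V, w, C) = (w·C/(P·V))^{1/3} · f((Q³·P²·w/(V·C²))^{1/3}). -/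
/-!
Use the four symmetries to normalise `P`, `V`, `w`, `C` to `1`: with `U = C⁻¹`, `A = L`,
`S = Z / Q` and `τ = S V` the invariance reads `g Q P V w C = L⁻¹ · g Z 1 1 1 1`, so
`f z := g z 1 1 1 1` works. That these choices of `S` and `A` make `P` and `w` equal to `1`
is checked on cubes, where it is an identity of monomials.
-/

def ScaleLeverageInvariant (g : ℝ → ℝ → ℝ → ℝ → ℝ → ℝ) : Prop :=
  ∀ Q P V w C S U τ A : ℝ, 0 < Q → 0 < P → 0 < V → 0 < w → 0 < C →
    0 < S → 0 < U → 0 < τ → 0 < A →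
    g (S * Q) (S⁻¹ * U * A⁻¹ * P) (S * τ⁻¹ * V) (τ⁻¹ * A ^ 2 * w) (U * C)
      = A * g Q P V w C

theorem ScaleLeverageInvariant.eq_inv_mul_normalized {g : ℝ → ℝ → ℝ → ℝ → ℝ → ℝ}
    (hg : ScaleLeverageInvariant g) {Q P V w C S A : ℝ} (hQ : 0 < Q) (hP : 0 < P)
    (hV : 0 < V) (hw : 0 < w) (hC : 0 < C) (hS : 0 < S) (hA : 0 < A)
    (hSA : S * A * C = P) (hAw : A ^ 2 * w = S * V) :
    g Q P V w C = A⁻¹ * g (S * Q) 1 1 1 1 := by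
  have key := hg Q P V w C S C⁻¹ (S * V) A hQ hP hV hw hC hS (inv_pos.2 hC)
    (mul_pos hS hV) hA
  have hPnorm : S⁻¹ * C⁻¹ * A⁻¹ * P = 1 := by rw [← hSA]; field_simp
  have hVnorm : S * (S * V)⁻¹ * V = 1 := by field_simp
  have hwnorm : (S * V)⁻¹ * A ^ 2 * w = 1 := by rw [mul_assoc, hAw]; field_simp
  rw [hPnorm, hVnorm, hwnorm, inv_mul_cancel₀ hC.ne'] at key
  rw [key, inv_mul_cancel_left₀ hA.ne']

theorem Real.rpow_one_third_pow_three {x : ℝ} (hx : 0 ≤ x) :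
    (x ^ ((1 : ℝ) / 3)) ^ 3 = x := by
  simpa using Real.rpow_inv_natCast_pow (n := 3) hx three_ne_zero

/-- The theorem of Kyle and Obizhaeva: if the market impact `g Q P V w C`
(with `w = σ²` and `C` the bet cost) is positive and invariant under rescaling the
units of shares (`S`), money (`U`) and time (`τ`) and under leverage neutrality (`A`),
then `g = (1/L) * f Z` with `L = (P*V/(w*C))^(1/3)` and `Z = (Q³P²w/(V C²))^(1/3)`. -/
theorem kyle_obizhaeva (g : ℝ → ℝ → ℝ → ℝ → ℝ → ℝ)
    (hg_pos : ∀ Q P V w C : ℝ, 0 < Q → 0 < P → 0 < V → 0 < w → 0 < C →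
      0 < g Q P V w C)
    (hg_inv : ∀ Q P V w C S U τ A : ℝ, 0 < Q → 0 < P → 0 < V → 0 < w → 0 < C →
      0 < S → 0 < U → 0 < τ → 0 < A →
      g (S * Q) (S⁻¹ * U * A⁻¹ * P) (S * τ⁻¹ * V) (τ⁻¹ * A ^ 2 * w) (U * C)
        = A * g Q P V w C) :
    ∃ f : ℝ → ℝ, (∀ z : ℝ, 0 < z → 0 < f z) ∧
      ∀ Q P V w C : ℝ, 0 < Q → 0 < P → 0 < V → 0 < w → 0 < C →
        g Q P V w C
          = (w * C / (P * V)) ^ ((1 : ℝ) / 3)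
            * f ((Q ^ 3 * P ^ 2 * w / (V * C ^ 2)) ^ ((1 : ℝ) / 3)) := by
  refine ⟨fun z ↦ g z 1 1 1 1, fun z hz ↦ hg_pos z 1 1 1 1 hz one_pos one_pos one_pos one_pos,
    fun Q P V w C hQ hP hV hw hC ↦ ?_⟩
  set Z := (Q ^ 3 * P ^ 2 * w / (V * C ^ 2)) ^ ((1 : ℝ) / 3)
  set L := (P * V / (w * C)) ^ ((1 : ℝ) / 3)
  have hZ : 0 < Z := by positivity
  have hL : 0 < L := by positivity
  have hZ3 : Z ^ 3 = Q ^ 3 * P ^ 2 * w / (V * C ^ 2) :=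
    Real.rpow_one_third_pow_three (by positivity)
  have hL3 : L ^ 3 = P * V / (w * C) := Real.rpow_one_third_pow_three (by positivity)
  have hSA : Z / Q * L * C = P := by
    refine (pow_left_inj₀ (by positivity) hP.le three_ne_zero).1 ?_
    rw [mul_pow, mul_pow, div_pow, hZ3, hL3]
    field_simp
  have hLw : L ^ 2 * w = Z / Q * V := by
    refine (pow_left_inj₀ (by positivity) (by positivity) three_ne_zero).1 ?_
    rw [show (L ^ 2 * w) ^ 3 = (L ^ 3) ^ 2 * w ^ 3 by ring, mul_pow, div_pow, hZ3, hL3]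
    field_simp
  have hLinv : L⁻¹ = (w * C / (P * V)) ^ ((1 : ℝ) / 3) := by
    rw [← Real.inv_rpow (by positivity), inv_div]
  rw [(show ScaleLeverageInvariant g from hg_inv).eq_inv_mul_normalized hQ hP hV hw hC
    (div_pos hZ hQ) hL hSA hLw, div_mul_cancel₀ Z hQ.ne', hLinv]
end

section
/- Let g : (ℝ₊)⁵ → ℝ₊ satisfy: for all Q, P, V, w, C > 0 and all S, U, τ, A > 0, g(S·Q, S⁻¹·U·A⁻¹·P, S·τ⁻¹·V, τ⁻¹·A²·w, U·C) = A · g(Q, P, V, w, C). Fix λ, μ ∈ ℝ with λ ≠ 0, and set x = λ·(3, 2, −1, 1, −2) and y = (−1, −1, 0, 0, 1) + μ·(3, 2, −1, 1, −2). Then there exists a function f : ℝ₊ → ℝ₊ such that for all Q, P, V, w, C > 0, g(Q, P, V, w, C) = Q^{y₁}·P^{y₂}·V^{y₃}·w^{y₄}·C^{y₅} · f(Q^{x₁}·P^{x₂}·V^{x₃}·w^{x₄}·C^{x₅}). -/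
/-!
Choosing the share, money and time units and the leverage so that `Q`, `P`, `V` and `C` all become
`1` shows `g Q P V w C = C / (Q P) · g(1, 1, 1, M, 1)`, where `M = Q³ P² w / (V C²)` is the
only dimensionless, leverage-neutral combination of the inputs. Both monomials of the theorem are
powers of `M` up to the factor `C / (Q P)`: the kernel monomial is `M ^ λ` and the prefactor is
`C / (Q P) · M ^ μ`. Hence `f z = z ^ (-μ/λ) · g(1, 1, 1, z ^ (1/λ), 1)` works.
-/

open Real

namespace MarketImpact

/-- Invariance under the units of shares (`S`), money (`U`) and time (`τ`), and under
leverage (`A`). -/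
def ScalingInvariant (g : ℝ → ℝ → ℝ → ℝ → ℝ → ℝ) : Prop :=
  ∀ Q P V w C S U τ A : ℝ, 0 < Q → 0 < P → 0 < V → 0 < w → 0 < C →
    0 < S → 0 < U → 0 < τ → 0 < A →
    g (S * Q) (S⁻¹ * U * A⁻¹ * P) (S * τ⁻¹ * V) (τ⁻¹ * A ^ 2 * w) (U * C) = A * g Q P V w C

noncomputable def dimensionlessGroup (Q P V w C : ℝ) : ℝ := Q ^ 3 * P ^ 2 * w / (V * C ^ 2)

section Positive

variable {Q P V w C : ℝ}

theorem dimensionlessGroup_pos (hQ : 0 < Q) (hP : 0 < P) (hV : 0 < V) (hw : 0 < w) (hC : 0 < C) :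
    0 < dimensionlessGroup Q P V w C := by
  unfold dimensionlessGroup; positivity

theorem rpow_kernel_monomial (hQ : 0 < Q) (hP : 0 < P) (hV : 0 < V) (hw : 0 < w) (hC : 0 < C)
    (t : ℝ) :
    Q ^ (3 * t) * P ^ (2 * t) * V ^ (-t) * w ^ t * C ^ (-(2 * t))
      = dimensionlessGroup Q P V w C ^ t := by
  have h3 : Q ^ (3 * t) = (Q ^ 3) ^ t := by exact_mod_cast rpow_natCast_mul hQ.le 3 t
  have h2P : P ^ (2 * t) = (P ^ 2) ^ t := by exact_mod_cast rpow_natCast_mul hP.le 2 t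
  have h2C : C ^ (2 * t) = (C ^ 2) ^ t := by exact_mod_cast rpow_natCast_mul hC.le 2 t
  rw [dimensionlessGroup, div_rpow (by positivity) (by positivity), mul_rpow (by positivity)
    (by positivity), mul_rpow (by positivity) (by positivity), mul_rpow hV.le (by positivity),
    rpow_neg hV.le, rpow_neg hC.le, h3, h2P, h2C]
  field_simp

theorem rpow_prefactor_monomial (hQ : 0 < Q) (hP : 0 < P) (hV : 0 < V) (hw : 0 < w) (hC : 0 < C)
    (t : ℝ) :
    Q ^ (-1 + 3 * t) * P ^ (-1 + 2 * t) * V ^ (-t) * w ^ t * C ^ (1 - 2 * t)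
      = C / (Q * P) * dimensionlessGroup Q P V w C ^ t := by
  rw [← rpow_kernel_monomial hQ hP hV hw hC, rpow_add hQ, rpow_add hP, sub_eq_add_neg,
    rpow_add hC, rpow_neg_one, rpow_neg_one, rpow_one]
  field_simp

theorem eq_mul_apply_dimensionlessGroup {g : ℝ → ℝ → ℝ → ℝ → ℝ → ℝ} (hg : ScalingInvariant g)
    (hQ : 0 < Q) (hP : 0 < P) (hV : 0 < V) (hw : 0 < w) (hC : 0 < C) :
    g Q P V w C = C / (Q * P) * g 1 1 1 (dimensionlessGroup Q P V w C) 1 := by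
  -- the units `S = Q`, `U = C`, `τ = Q / V` and leverage `A = C / (Q P)` carry `(1, 1, 1, M, 1)`
  -- to `(Q, P, V, w, C)`
  convert hg 1 1 1 _ 1 Q C (Q / V) (C / (Q * P)) one_pos one_pos one_pos
    (dimensionlessGroup_pos hQ hP hV hw hC) one_pos hQ hC (by positivity) (by positivity) using 2
  · rw [mul_one]
  · field_simp
  · field_simp
  · rw [dimensionlessGroup]
    field_simp
  · rw [mul_one]

end Positive

end MarketImpact

open MarketImpact

/-- The general form of the market impact with bet cost `C`: for any fixed nonzero
kernel solution `x = lam • (3, 2, -1, 1, -2)` and any solution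
`y = (-1, -1, 0, 0, 1) + mu • (3, 2, -1, 1, -2)` of the inhomogeneous system,
there is `f` with `g = Q^y₁ P^y₂ V^y₃ w^y₄ C^y₅ * f (Q^x₁ P^x₂ V^x₃ w^x₄ C^x₅)`. -/
theorem market_impact_general_bet_cost (g : ℝ → ℝ → ℝ → ℝ → ℝ → ℝ)
    (hg_pos : ∀ Q P V w C : ℝ, 0 < Q → 0 < P → 0 < V → 0 < w → 0 < C →
      0 < g Q P V w C)
    (hg_inv : ∀ Q P V w C S U τ A : ℝ, 0 < Q → 0 < P → 0 < V → 0 < w → 0 < C →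
      0 < S → 0 < U → 0 < τ → 0 < A →
      g (S * Q) (S⁻¹ * U * A⁻¹ * P) (S * τ⁻¹ * V) (τ⁻¹ * A ^ 2 * w) (U * C)
        = A * g Q P V w C)
    (lam mu : ℝ) (hlam : lam ≠ 0) :
    ∃ f : ℝ → ℝ, (∀ z : ℝ, 0 < z → 0 < f z) ∧
      ∀ Q P V w C : ℝ, 0 < Q → 0 < P → 0 < V → 0 < w → 0 < C →
        g Q P V w C
          = Q ^ (-1 + 3 * mu) * P ^ (-1 + 2 * mu) * V ^ (-mu) * w ^ mu
              * C ^ (1 - 2 * mu)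
            * f (Q ^ (3 * lam) * P ^ (2 * lam) * V ^ (-lam) * w ^ lam
                  * C ^ (-(2 * lam))) := by
  refine ⟨fun z => z ^ (-mu / lam) * g 1 1 1 (z ^ lam⁻¹) 1, fun z hz => ?_, ?_⟩
  · exact mul_pos (rpow_pos_of_pos hz _)
      (hg_pos _ _ _ _ _ one_pos one_pos one_pos (rpow_pos_of_pos hz _) one_pos)
  intro Q P V w C hQ hP hV hw hC
  beta_reduce
  rw [rpow_kernel_monomial hQ hP hV hw hC, rpow_prefactor_monomial hQ hP hV hw hC,
    eq_mul_apply_dimensionlessGroup hg_inv hQ hP hV hw hC]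
  have hM := dimensionlessGroup_pos hQ hP hV hw hC
  generalize dimensionlessGroup Q P V w C = M at hM ⊢
  have hMlam : (M ^ lam) ^ lam⁻¹ = M := by
    rw [← rpow_mul hM.le, mul_inv_cancel₀ hlam, rpow_one]
  have hMmu : M ^ mu * (M ^ lam) ^ (-mu / lam) = 1 := by
    rw [← rpow_mul hM.le, mul_div_cancel₀ _ hlam, ← rpow_add hM, add_neg_cancel, rpow_zero]
  rw [hMlam, mul_assoc, ← mul_assoc (M ^ mu), hMmu, one_mul]
end

section
/- Let g : (ℝ₊)⁵ → ℝ₊ satisfy: for all Q, P, V, w, C > 0 and all S, U, τ, A > 0, g(S·Q, S⁻¹·U·A⁻¹·P, S·τ⁻¹·V, τ⁻¹·A²·w, U·C) = A · g(Q, P, V, w, C). Then there exists a function h : ℝ₊ → ℝ₊ such that for all Q, P, V, w, C > 0, g(Q, P, V, w, C) = √w · √(Q/V) · h(Q³·P²·w/(V·C²)). -/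
/-!
Unit invariance lets one rescale shares, money and time so that `Q`, `V`, `C` become `1`, and
leverage neutrality then rescales `w` to `1` as well, at the price of the factor
`A⁻¹ = √(w Q / V)` in front of `g`. Only the price survives this normalisation, and its
normalised value `Q P √(w Q / V) / C` is the square root of `Q³P²w/(VC²)`; hence
`h z := g 1 (√z) 1 1 1`.
-/

namespace MarketImpact

/-- Invariance under rescaling the units of shares (`S`), money (`U`) and time (`τ`),
together with leverage neutrality (`A`). -/
def IsUnitAndLeverageInvariant (g : ℝ → ℝ → ℝ → ℝ → ℝ → ℝ) : Prop :=
  ∀ Q P V w C S U τ A : ℝ, 0 < Q → 0 < P → 0 < V → 0 < w → 0 < C →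
    0 < S → 0 < U → 0 < τ → 0 < A →
    g (S * Q) (S⁻¹ * U * A⁻¹ * P) (S * τ⁻¹ * V) (τ⁻¹ * A ^ 2 * w) (U * C) = A * g Q P V w C

theorem eq_mul_apply_normalized {g : ℝ → ℝ → ℝ → ℝ → ℝ → ℝ} (hg : IsUnitAndLeverageInvariant g)
    {Q P V w C : ℝ} (hQ : 0 < Q) (hP : 0 < P) (hV : 0 < V) (hw : 0 < w) (hC : 0 < C) :
    g Q P V w C = √(w * (Q / V)) * g 1 (Q * P * √(w * (Q / V)) / C) 1 1 1 := by
  set s := √(w * (Q / V))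
  have hs : 0 < s := Real.sqrt_pos.mpr (by positivity)
  have hs_sq : s ^ 2 = w * (Q / V) := Real.sq_sqrt (by positivity)
  have key := hg Q P V w C Q⁻¹ C⁻¹ (V / Q) s⁻¹ hQ hP hV hw hC
    (by positivity) (by positivity) (by positivity) (by positivity)
  have hQ' : Q⁻¹ * Q = 1 := inv_mul_cancel₀ hQ.ne'
  have hP' : Q⁻¹⁻¹ * C⁻¹ * s⁻¹⁻¹ * P = Q * P * s / C := by field_simp
  have hV' : Q⁻¹ * (V / Q)⁻¹ * V = 1 := by field_simp
  have hw' : (V / Q)⁻¹ * s⁻¹ ^ 2 * w = 1 := by rw [inv_pow, hs_sq]; field_simp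
  have hC' : C⁻¹ * C = 1 := inv_mul_cancel₀ hC.ne'
  rw [hQ', hP', hV', hw', hC', ← div_eq_inv_mul, eq_div_iff hs.ne'] at key
  rw [← key, mul_comm]

theorem sqrt_impact_ratio {Q P V w C : ℝ} (hQ : 0 ≤ Q) (hP : 0 ≤ P) (hC : 0 ≤ C) :
    √(Q ^ 3 * P ^ 2 * w / (V * C ^ 2)) = Q * P * √(w * (Q / V)) / C := by
  have h : Q ^ 3 * P ^ 2 * w / (V * C ^ 2) = (Q * P / C) ^ 2 * (w * (Q / V)) := by ring
  rw [h, Real.sqrt_mul (sq_nonneg _), Real.sqrt_sq (by positivity)]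
  ring

end MarketImpact

open MarketImpact in
/-- Market impact with bet cost `C`, in square-root-law form: under unit invariance
and leverage neutrality, `g Q P V w C = √w * √(Q/V) * h (Q³P²w/(V C²))`, exhibiting
the deviation from the square-root law as a multiplicative factor. -/
theorem market_impact_sqrt_deviation_bet_cost (g : ℝ → ℝ → ℝ → ℝ → ℝ → ℝ)
    (hg_pos : ∀ Q P V w C : ℝ, 0 < Q → 0 < P → 0 < V → 0 < w → 0 < C →
      0 < g Q P V w C)
    (hg_inv : ∀ Q P V w C S U τ A : ℝ, 0 < Q → 0 < P → 0 < V → 0 < w → 0 < C →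
      0 < S → 0 < U → 0 < τ → 0 < A →
      g (S * Q) (S⁻¹ * U * A⁻¹ * P) (S * τ⁻¹ * V) (τ⁻¹ * A ^ 2 * w) (U * C)
        = A * g Q P V w C) :
    ∃ h : ℝ → ℝ, (∀ z : ℝ, 0 < z → 0 < h z) ∧
      ∀ Q P V w C : ℝ, 0 < Q → 0 < P → 0 < V → 0 < w → 0 < C →
        g Q P V w C
          = Real.sqrt w * Real.sqrt (Q / V)
            * h (Q ^ 3 * P ^ 2 * w / (V * C ^ 2)) := by
  refine ⟨fun z ↦ g 1 (√z) 1 1 1, fun z hz ↦ hg_pos _ _ _ _ _ one_pos (Real.sqrt_pos.mpr hz)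
    one_pos one_pos one_pos, fun Q P V w C hQ hP hV hw hC ↦ ?_⟩
  dsimp only
  rw [eq_mul_apply_normalized hg_inv hQ hP hV hw hC, sqrt_impact_ratio hQ.le hP.le hC.le,
    Real.sqrt_mul hw.le]
end

section
/- Let g : (ℝ₊)⁵ → ℝ₊ satisfy: for all Q, P, V, w, T > 0 and all S, U, τ, A > 0, g(S·Q, S⁻¹·U·A⁻¹·P, S·τ⁻¹·V, τ⁻¹·A²·w, τ·T) = A · g(Q, P, V, w, T). Then there exists a function h : ℝ₊ → ℝ₊ such that for all Q, P, V, w, T > 0, g(Q, P, V, w, T) = √w · √(Q/V) · h(Q/(V·T)). -/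
/-!
Scaling shares by `V T`, time by `T` and leverage by `√(T w)`, with the money unit chosen to
restore the price, carries the point `(Q/(VT), 1, 1, 1, 1)` to `(Q, P, V, w, T)`. Hence
`g Q P V w T = √(T w) · g (Q/(VT)) 1 1 1 1`, and `h z = g z 1 1 1 1 / √z` absorbs the
remaining factor `√T = √(Q/V) / √(Q/(VT))`.
-/

open Real

theorem eq_sqrt_mul_apply_participation (g : ℝ → ℝ → ℝ → ℝ → ℝ → ℝ)
    (hg_inv : ∀ Q P V w T S U τ A : ℝ, 0 < Q → 0 < P → 0 < V → 0 < w → 0 < T →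
      0 < S → 0 < U → 0 < τ → 0 < A →
      g (S * Q) (S⁻¹ * U * A⁻¹ * P) (S * τ⁻¹ * V) (τ⁻¹ * A ^ 2 * w) (τ * T)
        = A * g Q P V w T)
    {Q P V w T : ℝ} (hQ : 0 < Q) (hP : 0 < P) (hV : 0 < V) (hw : 0 < w) (hT : 0 < T) :
    g Q P V w T = √(T * w) * g (Q / (V * T)) 1 1 1 1 := by
  have hA : 0 < √(T * w) := by positivity
  calc g Q P V w T
      = g (V * T * (Q / (V * T))) ((V * T)⁻¹ * (P * (V * T) * √(T * w)) * (√(T * w))⁻¹ * 1)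
          (V * T * T⁻¹ * 1) (T⁻¹ * √(T * w) ^ 2 * 1) (T * 1) := by
        rw [sq_sqrt (by positivity)]
        congr 1 <;> field_simp
    _ = √(T * w) * g (Q / (V * T)) 1 1 1 1 :=
        hg_inv _ _ _ _ _ _ _ _ _ (by positivity) one_pos one_pos one_pos one_pos
          (by positivity) (by positivity) hT hA

/-- Market impact with execution horizon `T`: under unit invariance and leverage
neutrality, `g Q P V w T = √w * √(Q/V) * h (Q/(V*T))`, where `h` characterizes the
deviation from the square-root law in dependence of the participation rate. -/
theorem market_impact_sqrt_deviation_time (g : ℝ → ℝ → ℝ → ℝ → ℝ → ℝ)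
    (hg_pos : ∀ Q P V w T : ℝ, 0 < Q → 0 < P → 0 < V → 0 < w → 0 < T →
      0 < g Q P V w T)
    (hg_inv : ∀ Q P V w T S U τ A : ℝ, 0 < Q → 0 < P → 0 < V → 0 < w → 0 < T →
      0 < S → 0 < U → 0 < τ → 0 < A →
      g (S * Q) (S⁻¹ * U * A⁻¹ * P) (S * τ⁻¹ * V) (τ⁻¹ * A ^ 2 * w) (τ * T)
        = A * g Q P V w T) :
    ∃ h : ℝ → ℝ, (∀ z : ℝ, 0 < z → 0 < h z) ∧
      ∀ Q P V w T : ℝ, 0 < Q → 0 < P → 0 < V → 0 < w → 0 < T →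
        g Q P V w T
          = Real.sqrt w * Real.sqrt (Q / V) * h (Q / (V * T)) := by
  refine ⟨fun z => g z 1 1 1 1 / √z, fun z hz => ?_, fun Q P V w T hQ hP hV hw hT => ?_⟩
  · exact div_pos (hg_pos z 1 1 1 1 hz one_pos one_pos one_pos one_pos) (sqrt_pos.2 hz)
  · have hz : 0 < Q / (V * T) := by positivity
    have hQV : Q / V = Q / (V * T) * T := by field_simp
    rw [eq_sqrt_mul_apply_participation g hg_inv hQ hP hV hw hT, hQV,
      sqrt_mul hz.le, sqrt_mul hT.le]
    field_simp [(sqrt_pos.2 hz).ne']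
end

section
/- Let g : (ℝ₊)⁵ → ℝ₊ satisfy: for all Q, P, V, w, T > 0 and all S, U, τ, A > 0, g(S·Q, S⁻¹·U·A⁻¹·P, S·τ⁻¹·V, τ⁻¹·A²·w, τ·T) = A · g(Q, P, V, w, T). Fix λ, μ ∈ ℝ with λ ≠ 0, and set x = λ·(−1, 0, 1, 0, 1) and y = (1/2, 0, −1/2, 1/2, 0) + μ·(1, 0, −1, 0, −1). Then there exists a function f : ℝ₊ → ℝ₊ such that for all Q, P, V, w, T > 0, g(Q, P, V, w, T) = Q^{y₁}·P^{y₂}·V^{y₃}·w^{y₄}·T^{y₅} · f(Q^{x₁}·P^{x₂}·V^{x₃}·w^{x₄}·T^{x₅}). -/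
/-!
Choosing the units and the leverage so that `Q`, `P`, `w` and `T` all become `1`
(`S = Q⁻¹`, `τ = T⁻¹`, `A = (√(w T))⁻¹`, and `U` absorbing the price) shows that
`g Q P V w T = √(w T) · h (V T / Q)` with `h z = g 1 1 z 1 1`. The kernel monomial is
`(V T / Q) ^ λ`, and the particular monomial is `√(w T) · (V T / Q) ^ -(1/2 + μ)`, so
`f u = u ^ ((1/2 + μ) / λ) · h (u ^ λ⁻¹)` works.
-/

open Real

/-- Invariance of the market impact under changes of the units of shares (`S`), money (`U`)
and time (`τ`), together with leverage neutrality (`A`). -/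
def IsUnitAndLeverageInvariant (g : ℝ → ℝ → ℝ → ℝ → ℝ → ℝ) : Prop :=
  ∀ Q P V w T S U τ A : ℝ, 0 < Q → 0 < P → 0 < V → 0 < w → 0 < T →
    0 < S → 0 < U → 0 < τ → 0 < A →
    g (S * Q) (S⁻¹ * U * A⁻¹ * P) (S * τ⁻¹ * V) (τ⁻¹ * A ^ 2 * w) (τ * T) = A * g Q P V w T

theorem IsUnitAndLeverageInvariant.eq_sqrt_mul {g : ℝ → ℝ → ℝ → ℝ → ℝ → ℝ}
    (hg : IsUnitAndLeverageInvariant g) {Q P V w T : ℝ}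
    (hQ : 0 < Q) (hP : 0 < P) (hV : 0 < V) (hw : 0 < w) (hT : 0 < T) :
    g Q P V w T = √(w * T) * g 1 1 (Q⁻¹ * T * V) 1 1 := by
  have h := hg Q P V w T Q⁻¹ ((√(w * T))⁻¹ / (Q * P)) T⁻¹ (√(w * T))⁻¹ hQ hP hV hw hT
    (by positivity) (by positivity) (by positivity) (by positivity)
  rw [inv_pow, sq_sqrt (by positivity)] at h
  field_simp at h
  rw [mul_assoc Q⁻¹, ← div_eq_inv_mul, h]

theorem kernel_monomial_eq {Q V T : ℝ} (P w lam : ℝ) (hQ : 0 < Q) (hV : 0 < V) (hT : 0 < T) :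
    Q ^ (-lam) * P ^ (0 : ℝ) * V ^ lam * w ^ (0 : ℝ) * T ^ lam = (Q⁻¹ * T * V) ^ lam := by
  rw [mul_rpow (by positivity) hV.le, mul_rpow (by positivity) hT.le, inv_rpow hQ.le,
    rpow_neg hQ.le, rpow_zero, rpow_zero]
  ring

theorem particular_monomial_eq {Q V w T : ℝ} (P mu : ℝ)
    (hQ : 0 < Q) (hV : 0 < V) (hw : 0 < w) (hT : 0 < T) :
    Q ^ ((1 : ℝ) / 2 + mu) * P ^ (0 : ℝ) * V ^ (-(1 : ℝ) / 2 - mu) * w ^ ((1 : ℝ) / 2) * T ^ (-mu)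
      = √(w * T) * (Q⁻¹ * T * V) ^ (-((1 : ℝ) / 2 + mu)) := by
  rw [show -(1 : ℝ) / 2 - mu = -((1 : ℝ) / 2 + mu) by ring, sqrt_eq_rpow,
    mul_rpow hw.le hT.le, mul_rpow (by positivity) hV.le, mul_rpow (by positivity) hT.le,
    inv_rpow hQ.le, rpow_neg hQ.le, rpow_neg hT.le, rpow_neg hT.le, rpow_neg hV.le,
    rpow_zero, rpow_add hT]
  field_simp

/-- The general form of the market impact with execution horizon `T`: for any fixed
nonzero kernel solution `x = lam • (-1, 0, 1, 0, 1)` and any solution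
`y = (1/2, 0, -1/2, 1/2, 0) + mu • (1, 0, -1, 0, -1)` of the inhomogeneous system,
there is `f` with `g = Q^y₁ P^y₂ V^y₃ w^y₄ T^y₅ * f (Q^x₁ P^x₂ V^x₃ w^x₄ T^x₅)`. -/
theorem market_impact_general_time (g : ℝ → ℝ → ℝ → ℝ → ℝ → ℝ)
    (hg_pos : ∀ Q P V w T : ℝ, 0 < Q → 0 < P → 0 < V → 0 < w → 0 < T →
      0 < g Q P V w T)
    (hg_inv : ∀ Q P V w T S U τ A : ℝ, 0 < Q → 0 < P → 0 < V → 0 < w → 0 < T →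
      0 < S → 0 < U → 0 < τ → 0 < A →
      g (S * Q) (S⁻¹ * U * A⁻¹ * P) (S * τ⁻¹ * V) (τ⁻¹ * A ^ 2 * w) (τ * T)
        = A * g Q P V w T)
    (lam mu : ℝ) (hlam : lam ≠ 0) :
    ∃ f : ℝ → ℝ, (∀ z : ℝ, 0 < z → 0 < f z) ∧
      ∀ Q P V w T : ℝ, 0 < Q → 0 < P → 0 < V → 0 < w → 0 < T →
        g Q P V w T
          = Q ^ ((1 : ℝ) / 2 + mu) * P ^ (0 : ℝ) * V ^ (-(1 : ℝ) / 2 - mu)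
              * w ^ ((1 : ℝ) / 2) * T ^ (-mu)
            * f (Q ^ (-lam) * P ^ (0 : ℝ) * V ^ lam * w ^ (0 : ℝ) * T ^ lam) := by
  refine ⟨fun u => u ^ (((1 : ℝ) / 2 + mu) / lam) * g 1 1 (u ^ lam⁻¹) 1 1,
    fun u hu => mul_pos (rpow_pos_of_pos hu _)
      (hg_pos _ _ _ _ _ one_pos one_pos (rpow_pos_of_pos hu _) one_pos one_pos), ?_⟩
  intro Q P V w T hQ hP hV hw hT
  have hz : 0 < Q⁻¹ * T * V := by positivity
  dsimp only
  rw [kernel_monomial_eq P w lam hQ hV hT, particular_monomial_eq P mu hQ hV hw hT,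
    rpow_rpow_inv hz.le hlam, ← rpow_mul hz.le, mul_div_cancel₀ _ hlam,
    IsUnitAndLeverageInvariant.eq_sqrt_mul hg_inv hQ hP hV hw hT, rpow_neg hz.le]
  field_simp
end
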